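/- arXiv:1707.02497 — 2 statements merged into one kernel-verified Lean document; each statement's English description precedes it below -/
import Mathlib

section
/- Let G(λ) = C(λE - A)^{-1}B + D with λE - A regular having no finite eigenvalues on the unit circle, and let γ > 0 not be a singular value of D. Then for θ ∈ [0, 2π), e^{iθ} is an eigenvalue of the matrix pencil (S_γ, T_γ), where S_γ = [[A - BR^{-1}D*C, -γBR^{-1}B*], [0, E*]] and T_γ = [[E, 0], [-γC*S^{-1}C, (A - BR^{-1}D*C)*]] with R = D*D - γ²I and S = DD* - γ²I, if and only if γ is a singular value of G(e^{iθ}). -/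
open Matrix Complex

/-- `γ` is a singular value of `M` (appropriate for `γ > 0`). -/
def IsSingularValue {p m : ℕ} (γ : ℝ) (M : Matrix (Fin p) (Fin m) ℂ) : Prop :=
  ∃ (u : Fin p → ℂ) (v : Fin m → ℂ), u ≠ 0 ∧ v ≠ 0 ∧
    M *ᵥ v = (γ : ℂ) • u ∧ Mᴴ *ᵥ u = (γ : ℂ) • v

noncomputable def Rmat {m p : ℕ} (D : Matrix (Fin p) (Fin m) ℂ) (γ : ℝ) :
    Matrix (Fin m) (Fin m) ℂ := Dᴴ * D - ((γ : ℂ) ^ 2) • 1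

noncomputable def Smat {m p : ℕ} (D : Matrix (Fin p) (Fin m) ℂ) (γ : ℝ) :
    Matrix (Fin p) (Fin p) ℂ := D * Dᴴ - ((γ : ℂ) ^ 2) • 1

/-- The matrix `S_γ` of the discrete-time pencil. -/
noncomputable def Spencil {n m p : ℕ} (A E : Matrix (Fin n) (Fin n) ℂ)
    (B : Matrix (Fin n) (Fin m) ℂ) (C : Matrix (Fin p) (Fin n) ℂ)
    (D : Matrix (Fin p) (Fin m) ℂ) (γ : ℝ) :
    Matrix (Fin n ⊕ Fin n) (Fin n ⊕ Fin n) ℂ :=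
  fromBlocks (A - B * (Rmat D γ)⁻¹ * Dᴴ * C) (-((γ : ℂ) • (B * (Rmat D γ)⁻¹ * Bᴴ)))
    0 Eᴴ

/-- The matrix `T_γ` of the discrete-time pencil. -/
noncomputable def Tpencil {n m p : ℕ} (A E : Matrix (Fin n) (Fin n) ℂ)
    (B : Matrix (Fin n) (Fin m) ℂ) (C : Matrix (Fin p) (Fin n) ℂ)
    (D : Matrix (Fin p) (Fin m) ℂ) (γ : ℝ) :
    Matrix (Fin n ⊕ Fin n) (Fin n ⊕ Fin n) ℂ :=
  fromBlocks E 0 (-((γ : ℂ) • (Cᴴ * (Smat D γ)⁻¹ * C))) (A - B * (Rmat D γ)⁻¹ * Dᴴ * C)ᴴ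

section Aux

lemma sumElim_eq_zero_iff {α β M : Type*} [Zero M] (a : α → M) (b : β → M) :
    Sum.elim a b = 0 ↔ a = 0 ∧ b = 0 := by
  constructor
  · intro h
    exact ⟨funext fun i => congrFun h (Sum.inl i), funext fun i => congrFun h (Sum.inr i)⟩
  · rintro ⟨rfl, rfl⟩
    exact Sum.elim_zero_zero

lemma isUnit_Rmat_det {m p : ℕ} {D : Matrix (Fin p) (Fin m) ℂ} {γ : ℝ}
    (hγ : 0 < γ) (hD : ¬ IsSingularValue γ D) : IsUnit (Rmat D γ).det := by
  have hγc : (γ : ℂ) ≠ 0 := by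
    simpa using hγ.ne'
  rw [isUnit_iff_ne_zero]
  intro h
  obtain ⟨v, hv, hker⟩ := Matrix.exists_mulVec_eq_zero_iff.2 h
  have hDDv : Dᴴ *ᵥ (D *ᵥ v) = ((γ : ℂ) ^ 2) • v := by
    rw [Rmat, Matrix.sub_mulVec, Matrix.smul_mulVec, Matrix.one_mulVec,
      sub_eq_zero] at hker
    rw [Matrix.mulVec_mulVec, hker]
  have hDv : Dᴴ *ᵥ ((γ : ℂ)⁻¹ • (D *ᵥ v)) = (γ : ℂ) • v := by
    rw [Matrix.mulVec_smul, hDDv, smul_smul]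
    congr 1
    field_simp
  refine hD ⟨(γ : ℂ)⁻¹ • (D *ᵥ v), v, ?_, hv, ?_, hDv⟩
  · intro h0
    rw [h0, Matrix.mulVec_zero] at hDv
    exact hv ((smul_eq_zero.mp hDv.symm).resolve_left hγc)
  · rw [smul_smul, mul_inv_cancel₀ hγc, one_smul]

lemma isUnit_Smat_det {m p : ℕ} {D : Matrix (Fin p) (Fin m) ℂ} {γ : ℝ}
    (hγ : 0 < γ) (hD : ¬ IsSingularValue γ D) : IsUnit (Smat D γ).det := by
  have hγc : (γ : ℂ) ≠ 0 := by
    simpa using hγ.ne'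
  rw [isUnit_iff_ne_zero]
  intro h
  obtain ⟨u, hu, hker⟩ := Matrix.exists_mulVec_eq_zero_iff.2 h
  have hDDu : D *ᵥ (Dᴴ *ᵥ u) = ((γ : ℂ) ^ 2) • u := by
    rw [Smat, Matrix.sub_mulVec, Matrix.smul_mulVec, Matrix.one_mulVec,
      sub_eq_zero] at hker
    rw [Matrix.mulVec_mulVec, hker]
  have hDu : D *ᵥ ((γ : ℂ)⁻¹ • (Dᴴ *ᵥ u)) = (γ : ℂ) • u := by
    rw [Matrix.mulVec_smul, hDDu, smul_smul]
    congr 1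
    field_simp
  refine hD ⟨u, (γ : ℂ)⁻¹ • (Dᴴ *ᵥ u), hu, ?_, hDu, ?_⟩
  · intro h0
    rw [h0, Matrix.mulVec_zero] at hDu
    exact hu ((smul_eq_zero.mp hDu.symm).resolve_left hγc)
  · rw [smul_smul, mul_inv_cancel₀ hγc, one_smul]

end Aux

/-- Theorem 3 (discrete time): `e^{iθ}` is an eigenvalue of the pencil `(S_γ, T_γ)`
iff `γ` is a singular value of `G(e^{iθ}) = C (e^{iθ}E - A)⁻¹ B + D`. -/
theorem unit_modulus_eig_iff_singular_value {n m p : ℕ}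
    (A E : Matrix (Fin n) (Fin n) ℂ) (B : Matrix (Fin n) (Fin m) ℂ)
    (C : Matrix (Fin p) (Fin n) ℂ) (D : Matrix (Fin p) (Fin m) ℂ)
    (γ : ℝ) (hγ : 0 < γ) (hD : ¬ IsSingularValue γ D)
    (hreg : ∀ t : ℝ, IsUnit (Complex.exp (Complex.I * (t : ℂ)) • E - A))
    (θ : ℝ) (hθ : θ ∈ Set.Ico 0 (2 * Real.pi)) :
    (Spencil A E B C D γ - Complex.exp (Complex.I * (θ : ℂ)) • Tpencil A E B C D γ).det = 0 ↔
      IsSingularValue γ (C * (Complex.exp (Complex.I * (θ : ℂ)) • E - A)⁻¹ * B + D) := by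
  have hγc : (γ : ℂ) ≠ 0 := by simpa using hγ.ne'
  set z : ℂ := Complex.exp (Complex.I * (θ : ℂ)) with hzdef
  have hzz : star z * z = 1 := by
    have h1 : star z = Complex.exp (-(Complex.I * (θ : ℂ))) := by
      rw [hzdef, Complex.star_def, ← Complex.exp_conj]
      congr 1
      simp [Complex.conj_I]
    rw [h1, ← Complex.exp_add, neg_add_cancel, Complex.exp_zero]
  set Z : Matrix (Fin n) (Fin n) ℂ := z • E - A with hZdef
  have hZ : IsUnit Z.det := (Matrix.isUnit_iff_isUnit_det _).1 (hreg θ)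
  have hZH : IsUnit Zᴴ.det := by
    rw [Matrix.det_conjTranspose]; exact hZ.star
  have hR : IsUnit (Rmat D γ).det := isUnit_Rmat_det hγ hD
  have hS : IsUnit (Smat D γ).det := isUnit_Smat_det hγ hD
  have hRH : (Rmat D γ)ᴴ = Rmat D γ := by
    simp [Rmat, Matrix.conjTranspose_sub, Matrix.conjTranspose_mul,
      Matrix.conjTranspose_smul, ← Complex.ofReal_pow]
  have hRinvH : ((Rmat D γ)⁻¹)ᴴ = (Rmat D γ)⁻¹ := by
    rw [Matrix.conjTranspose_nonsing_inv, hRH]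
  have hcomm : D * Rmat D γ = Smat D γ * D := by
    simp only [Rmat, Smat, Matrix.mul_sub, Matrix.sub_mul, Matrix.mul_smul,
      Matrix.smul_mul, Matrix.mul_one, Matrix.one_mul, Matrix.mul_assoc]
  have hDR : D * (Rmat D γ)⁻¹ = (Smat D γ)⁻¹ * D := by
    calc D * (Rmat D γ)⁻¹
        = ((Smat D γ)⁻¹ * Smat D γ) * (D * (Rmat D γ)⁻¹) := by
          rw [Matrix.nonsing_inv_mul _ hS, Matrix.one_mul]
      _ = (Smat D γ)⁻¹ * ((Smat D γ * D) * (Rmat D γ)⁻¹) := by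
          simp only [Matrix.mul_assoc]
      _ = (Smat D γ)⁻¹ * ((D * Rmat D γ) * (Rmat D γ)⁻¹) := by
          rw [hcomm]
      _ = (Smat D γ)⁻¹ * D := by
          rw [Matrix.mul_assoc, Matrix.mul_nonsing_inv _ hR, Matrix.mul_one]
  set G := C * Z⁻¹ * B + D with hG
  have hGD : C * Z⁻¹ * B = G - D := by rw [hG, add_sub_cancel_right]
  have hGDH : Bᴴ * (Zᴴ)⁻¹ * Cᴴ = Gᴴ - Dᴴ := by
    have h := congrArg Matrix.conjTranspose hGD
    simpa only [Matrix.conjTranspose_mul, Matrix.conjTranspose_sub,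
      Matrix.conjTranspose_nonsing_inv, Matrix.mul_assoc] using h
  unfold Spencil Tpencil
  set F := A - B * (Rmat D γ)⁻¹ * Dᴴ * C with hF
  have hpencil :
      fromBlocks F (-((γ : ℂ) • (B * (Rmat D γ)⁻¹ * Bᴴ))) 0 Eᴴ
        - z • fromBlocks E 0 (-((γ : ℂ) • (Cᴴ * (Smat D γ)⁻¹ * C))) Fᴴ =
      fromBlocks (F - z • E) (-((γ : ℂ) • (B * (Rmat D γ)⁻¹ * Bᴴ)))
        (z • ((γ : ℂ) • (Cᴴ * (Smat D γ)⁻¹ * C))) (Eᴴ - z • Fᴴ) := by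
    rw [Matrix.fromBlocks_smul, sub_eq_add_neg, Matrix.fromBlocks_neg,
      Matrix.fromBlocks_add]
    simp [sub_eq_add_neg]
  rw [hpencil, ← Matrix.exists_mulVec_eq_zero_iff]
  have hFH : Fᴴ = Aᴴ - Cᴴ * ((Smat D γ)⁻¹ * (D * Bᴴ)) := by
    rw [hF]
    simp only [Matrix.conjTranspose_sub, Matrix.conjTranspose_mul,
      Matrix.conjTranspose_conjTranspose, hRinvH]
    congr 1
    calc Cᴴ * (D * ((Rmat D γ)⁻¹ * Bᴴ)) = Cᴴ * ((D * (Rmat D γ)⁻¹) * Bᴴ) := by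
          rw [Matrix.mul_assoc]
      _ = Cᴴ * ((Smat D γ)⁻¹ * (D * Bᴴ)) := by rw [hDR, Matrix.mul_assoc]
  have hZHmat : Zᴴ = star z • Eᴴ - Aᴴ := by
    rw [hZdef, Matrix.conjTranspose_sub, Matrix.conjTranspose_smul]
  constructor
  · -- eigenvalue → singular value
    rintro ⟨w, hw, hker⟩
    set x := w ∘ Sum.inl with hx
    set y := w ∘ Sum.inr with hy
    rw [Matrix.fromBlocks_mulVec, sumElim_eq_zero_iff] at hker
    obtain ⟨htop, hbot⟩ := hker
    set v : Fin m → ℂ :=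
      -((Rmat D γ)⁻¹ *ᵥ (Dᴴ *ᵥ (C *ᵥ x) + (γ : ℂ) • (Bᴴ *ᵥ y))) with hvdef
    set u : Fin p → ℂ :=
      -((Smat D γ)⁻¹ *ᵥ ((γ : ℂ) • (C *ᵥ x) + D *ᵥ (Bᴴ *ᵥ y))) with hudef
    have hRv : Rmat D γ *ᵥ v = -(Dᴴ *ᵥ (C *ᵥ x) + (γ : ℂ) • (Bᴴ *ᵥ y)) := by
      rw [hvdef, Matrix.mulVec_neg, Matrix.mulVec_mulVec,
        Matrix.mul_nonsing_inv _ hR, Matrix.one_mulVec]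
    have hSu : Smat D γ *ᵥ u = -((γ : ℂ) • (C *ᵥ x) + D *ᵥ (Bᴴ *ᵥ y)) := by
      rw [hudef, Matrix.mulVec_neg, Matrix.mulVec_mulVec,
        Matrix.mul_nonsing_inv _ hS, Matrix.one_mulVec]
    -- first pencil equation gives Z x = B v
    have hZx : Z *ᵥ x = B *ᵥ v := by
      rw [hZdef, hvdef]
      rw [hF] at htop
      funext i
      have h1 := congrFun htop i
      simp only [Matrix.sub_mulVec, Matrix.add_mulVec, Matrix.neg_mulVec,
        Matrix.mulVec_add, Matrix.mulVec_sub, Matrix.mulVec_neg, Matrix.mulVec_smul,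
        Matrix.smul_mulVec, ← Matrix.mulVec_mulVec, Pi.add_apply, Pi.sub_apply,
        Pi.neg_apply, Pi.smul_apply, Pi.zero_apply, smul_eq_mul] at h1 ⊢
      linear_combination -h1
    -- second pencil equation gives Zᴴ y = Cᴴ u
    have hZy : Zᴴ *ᵥ y = Cᴴ *ᵥ u := by
      rw [hZHmat, hudef]
      rw [hFH] at hbot
      funext i
      have h1 := congrFun hbot i
      simp only [Matrix.sub_mulVec, Matrix.add_mulVec, Matrix.neg_mulVec,
        Matrix.mulVec_add, Matrix.mulVec_sub, Matrix.mulVec_neg, Matrix.mulVec_smul,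
        Matrix.smul_mulVec, ← Matrix.mulVec_mulVec, Pi.add_apply, Pi.sub_apply,
        Pi.neg_apply, Pi.smul_apply, Pi.zero_apply, smul_eq_mul] at h1 ⊢
      linear_combination (star z) * h1 +
        ((Aᴴ *ᵥ y) i - (γ : ℂ) * (Cᴴ *ᵥ ((Smat D γ)⁻¹ *ᵥ (C *ᵥ x))) i
          - (Cᴴ *ᵥ ((Smat D γ)⁻¹ *ᵥ (D *ᵥ (Bᴴ *ᵥ y)))) i) * hzz
    have hxv : Z⁻¹ *ᵥ (B *ᵥ v) = x := by
      rw [← hZx, Matrix.mulVec_mulVec, Matrix.nonsing_inv_mul _ hZ, Matrix.one_mulVec]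
    have hyu : (Zᴴ)⁻¹ *ᵥ (Cᴴ *ᵥ u) = y := by
      rw [← hZy, Matrix.mulVec_mulVec, Matrix.nonsing_inv_mul _ hZH, Matrix.one_mulVec]
    have hCx : C *ᵥ x = (G - D) *ᵥ v := by
      rw [← hxv, Matrix.mulVec_mulVec, Matrix.mulVec_mulVec, hGD]
    have hBy : Bᴴ *ᵥ y = (Gᴴ - Dᴴ) *ᵥ u := by
      rw [← hyu, Matrix.mulVec_mulVec, Matrix.mulVec_mulVec, hGDH]
    rw [hCx, hBy] at hRv hSu
    simp only [Rmat, Smat] at hRv hSu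
    have ha : (γ : ℂ) • (Gᴴ *ᵥ u - (γ : ℂ) • v) + Dᴴ *ᵥ (G *ᵥ v - (γ : ℂ) • u) = 0 := by
      funext i
      have h1 := congrFun hRv i
      simp only [Matrix.sub_mulVec, Matrix.add_mulVec, Matrix.neg_mulVec,
        Matrix.mulVec_add, Matrix.mulVec_sub, Matrix.mulVec_neg, Matrix.mulVec_smul,
        Matrix.smul_mulVec, Matrix.one_mulVec, ← Matrix.mulVec_mulVec,
        Pi.add_apply, Pi.sub_apply, Pi.neg_apply, Pi.smul_apply, Pi.zero_apply,
        smul_eq_mul] at h1 ⊢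
      linear_combination h1
    have hb : (γ : ℂ) • (G *ᵥ v - (γ : ℂ) • u) + D *ᵥ (Gᴴ *ᵥ u - (γ : ℂ) • v) = 0 := by
      funext i
      have h1 := congrFun hSu i
      simp only [Matrix.sub_mulVec, Matrix.add_mulVec, Matrix.neg_mulVec,
        Matrix.mulVec_add, Matrix.mulVec_sub, Matrix.mulVec_neg, Matrix.mulVec_smul,
        Matrix.smul_mulVec, Matrix.one_mulVec, ← Matrix.mulVec_mulVec,
        Pi.add_apply, Pi.sub_apply, Pi.neg_apply, Pi.smul_apply, Pi.zero_apply,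
        smul_eq_mul] at h1 ⊢
      linear_combination h1
    have ha0 : G *ᵥ v - (γ : ℂ) • u = 0 := by
      by_contra hne
      have hbne : -(Gᴴ *ᵥ u - (γ : ℂ) • v) ≠ 0 := by
        intro h0
        have h0' : Gᴴ *ᵥ u - (γ : ℂ) • v = 0 := neg_eq_zero.mp h0
        rw [h0', Matrix.mulVec_zero, add_zero, smul_eq_zero] at hb
        exact hne (hb.resolve_left hγc)
      refine hD ⟨G *ᵥ v - (γ : ℂ) • u, -(Gᴴ *ᵥ u - (γ : ℂ) • v), hne, hbne, ?_, ?_⟩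
      · rw [Matrix.mulVec_neg]
        have h3 : D *ᵥ (Gᴴ *ᵥ u - (γ : ℂ) • v) = -((γ : ℂ) • (G *ᵥ v - (γ : ℂ) • u)) :=
          eq_neg_of_add_eq_zero_right hb
        rw [h3, neg_neg]
      · have h3 : Dᴴ *ᵥ (G *ᵥ v - (γ : ℂ) • u) = -((γ : ℂ) • (Gᴴ *ᵥ u - (γ : ℂ) • v)) :=
          eq_neg_of_add_eq_zero_right ha
        rw [h3, ← smul_neg]
    have hb0 : Gᴴ *ᵥ u - (γ : ℂ) • v = 0 := by
      rw [ha0, Matrix.mulVec_zero, add_zero, smul_eq_zero] at ha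
      exact ha.resolve_left hγc
    have hGv : G *ᵥ v = (γ : ℂ) • u := sub_eq_zero.mp ha0
    have hGu : Gᴴ *ᵥ u = (γ : ℂ) • v := sub_eq_zero.mp hb0
    have hvne : v ≠ 0 := by
      intro h0
      have hu0 : u = 0 := by
        rw [h0, Matrix.mulVec_zero, eq_comm, smul_eq_zero] at hGv
        exact hGv.resolve_left hγc
      apply hw
      have hx0 : x = 0 := by rw [← hxv, h0, Matrix.mulVec_zero, Matrix.mulVec_zero]
      have hy0 : y = 0 := by rw [← hyu, hu0, Matrix.mulVec_zero, Matrix.mulVec_zero]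
      have hrec : Sum.elim x y = w := Sum.elim_comp_inl_inr w
      rw [← hrec, hx0, hy0]
      exact Sum.elim_zero_zero
    have hune : u ≠ 0 := by
      intro h0
      apply hvne
      rw [h0, Matrix.mulVec_zero, eq_comm, smul_eq_zero] at hGu
      exact hGu.resolve_left hγc
    exact ⟨u, v, hune, hvne, hGv, hGu⟩
  · -- singular value → eigenvalue
    rintro ⟨u, v, hu, hv, hGv, hGu⟩
    set x := Z⁻¹ *ᵥ (B *ᵥ v) with hx
    set y := (Zᴴ)⁻¹ *ᵥ (Cᴴ *ᵥ u) with hy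
    have hZx : Z *ᵥ x = B *ᵥ v := by
      rw [hx, Matrix.mulVec_mulVec, Matrix.mul_nonsing_inv _ hZ, Matrix.one_mulVec]
    have hZy : Zᴴ *ᵥ y = Cᴴ *ᵥ u := by
      rw [hy, Matrix.mulVec_mulVec, Matrix.mul_nonsing_inv _ hZH, Matrix.one_mulVec]
    have hCx : C *ᵥ x = (G - D) *ᵥ v := by
      rw [hx, Matrix.mulVec_mulVec, Matrix.mulVec_mulVec, hGD]
    have hBy : Bᴴ *ᵥ y = (Gᴴ - Dᴴ) *ᵥ u := by
      rw [hy, Matrix.mulVec_mulVec, Matrix.mulVec_mulVec, hGDH]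
    have hK1 : Dᴴ *ᵥ (C *ᵥ x) + (γ : ℂ) • (Bᴴ *ᵥ y) = -(Rmat D γ *ᵥ v) := by
      rw [hCx, hBy]
      simp only [Rmat, Matrix.sub_mulVec, Matrix.mulVec_sub, Matrix.mulVec_smul,
        Matrix.smul_mulVec, Matrix.one_mulVec, ← Matrix.mulVec_mulVec,
        hGv, hGu]
      funext i
      simp only [Pi.add_apply, Pi.sub_apply, Pi.neg_apply, Pi.smul_apply, smul_eq_mul]
      ring
    have hK2 : (γ : ℂ) • (C *ᵥ x) + D *ᵥ (Bᴴ *ᵥ y) = -(Smat D γ *ᵥ u) := by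
      rw [hCx, hBy]
      simp only [Smat, Matrix.sub_mulVec, Matrix.mulVec_sub, Matrix.mulVec_smul,
        Matrix.smul_mulVec, Matrix.one_mulVec, ← Matrix.mulVec_mulVec,
        hGv, hGu]
      funext i
      simp only [Pi.add_apply, Pi.sub_apply, Pi.neg_apply, Pi.smul_apply, smul_eq_mul]
      ring
    have hK1' : B *ᵥ ((Rmat D γ)⁻¹ *ᵥ (Dᴴ *ᵥ (C *ᵥ x) + (γ : ℂ) • (Bᴴ *ᵥ y)))
        = -(B *ᵥ v) := by
      rw [hK1, Matrix.mulVec_neg, Matrix.mulVec_mulVec, Matrix.nonsing_inv_mul _ hR,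
        Matrix.one_mulVec, Matrix.mulVec_neg]
    have hK2' : Cᴴ *ᵥ ((Smat D γ)⁻¹ *ᵥ ((γ : ℂ) • (C *ᵥ x) + D *ᵥ (Bᴴ *ᵥ y)))
        = -(Cᴴ *ᵥ u) := by
      rw [hK2, Matrix.mulVec_neg, Matrix.mulVec_mulVec, Matrix.nonsing_inv_mul _ hS,
        Matrix.one_mulVec, Matrix.mulVec_neg]
    refine ⟨Sum.elim x y, ?_, ?_⟩
    · intro h0
      rw [sumElim_eq_zero_iff] at h0
      obtain ⟨hx0, hy0⟩ := h0
      have hBv : B *ᵥ v = 0 := by rw [← hZx, hx0, Matrix.mulVec_zero]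
      have hCu : Cᴴ *ᵥ u = 0 := by rw [← hZy, hy0, Matrix.mulVec_zero]
      apply hD
      refine ⟨u, v, hu, hv, ?_, ?_⟩
      · have : G *ᵥ v = D *ᵥ v := by
          rw [hG, Matrix.add_mulVec, ← Matrix.mulVec_mulVec, ← Matrix.mulVec_mulVec,
            hBv, Matrix.mulVec_zero, Matrix.mulVec_zero, zero_add]
        rw [← this, hGv]
      · have : Gᴴ *ᵥ u = Dᴴ *ᵥ u := by
          have h2 : (Gᴴ - Dᴴ) *ᵥ u = 0 := by
            rw [← hGDH, ← Matrix.mulVec_mulVec, ← Matrix.mulVec_mulVec, hCu,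
              Matrix.mulVec_zero, Matrix.mulVec_zero]
          rw [Matrix.sub_mulVec, sub_eq_zero] at h2
          exact h2
        rw [← this, hGu]
    · rw [Matrix.fromBlocks_mulVec]
      have hxl : Sum.elim x y ∘ Sum.inl = x := rfl
      have hyr : Sum.elim x y ∘ Sum.inr = y := rfl
      rw [hxl, hyr, sumElim_eq_zero_iff]
      constructor
      · -- top block equation
        rw [hF]
        funext i
        have h1 := congrFun hZx i
        have h2 := congrFun hK1' i
        rw [hZdef] at h1
        simp only [Matrix.sub_mulVec, Matrix.add_mulVec, Matrix.neg_mulVec,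
          Matrix.mulVec_add, Matrix.mulVec_sub, Matrix.mulVec_neg, Matrix.mulVec_smul,
          Matrix.smul_mulVec, ← Matrix.mulVec_mulVec, Pi.add_apply, Pi.sub_apply,
          Pi.neg_apply, Pi.smul_apply, Pi.zero_apply, smul_eq_mul] at h1 h2 ⊢
        linear_combination -h1 - h2
      · -- bottom block equation
        rw [hFH]
        funext i
        have h1 := congrFun hZy i
        have h2 := congrFun hK2' i
        rw [hZHmat] at h1
        simp only [Matrix.sub_mulVec, Matrix.add_mulVec, Matrix.neg_mulVec,
          Matrix.mulVec_add, Matrix.mulVec_sub, Matrix.mulVec_neg, Matrix.mulVec_smul,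
          Matrix.smul_mulVec, ← Matrix.mulVec_mulVec, Pi.add_apply, Pi.sub_apply,
          Pi.neg_apply, Pi.smul_apply, Pi.zero_apply, smul_eq_mul] at h1 h2 ⊢
        linear_combination z * h1 + z * h2 - (Eᴴ *ᵥ y) i * hzz
end

section
/- Suppose e^{iθ} is an eigenvalue of the pencil (S_γ, T_γ) from the discrete-time theorem with eigenvector (q, s) ∈ ℂ^{2n}, i.e. S_γ(q,s) = e^{iθ}T_γ(q,s), where e^{iθ}E - A is invertible and γ is not a singular value of D. Define v and u via (v, u) = [[-D, γI], [γI, -D*]]^{-1} [[C, 0],[0, B*]] (q, s). Then u and v are nonzero, G(e^{iθ})v = γu and G(e^{iθ})*u = γv, so γ is a singular value of G(e^{iθ}). -/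
open Matrix Complex

/-!
Write `M = e^{iθ}E - A` and `K = [[-D, γI], [γI, -Dᴴ]]`, so that `(v, u) = K⁻¹ (Cq, Bᴴs)`.
Both pencil matrices are block-diagonal matrices plus a feedback through `K⁻¹ diag(C, Bᴴ)`,
which turns the eigen-equation into `Mq = Bv` and `e^{-iθ}Eᴴs = Aᴴs + Cᴴu`, i.e. `Mᴴs = Cᴴu`
since `|e^{iθ}| = 1`. Hence `G v = Cq + Dv` and `Gᴴ u = Bᴴs + Dᴴu`, and the two rows of
`K (v, u) = (Cq, Bᴴs)` say that these equal `γu` and `γv`. If `u` or `v` vanished, these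
equations would force both to vanish, and invertibility of `M` would give `q = s = 0`.
-/

section General

variable {ι κ ν α : Type*}

lemma mul_inv_mul_add_mulVec_of_mulVec_eq [Fintype ι] [DecidableEq ι] [Fintype κ] [CommRing α]
    {M : Matrix ι ι α} (hM : IsUnit M) (B : Matrix ι κ α) (C : Matrix ν ι α) (D : Matrix ν κ α)
    {q : ι → α} {v : κ → α} (h : M *ᵥ q = B *ᵥ v) :
    (C * M⁻¹ * B + D) *ᵥ v = C *ᵥ q + D *ᵥ v := by
  rw [add_mulVec, ← mulVec_mulVec, ← h, mulVec_mulVec,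
    nonsing_inv_mul_cancel_right _ _ ((isUnit_iff_isUnit_det _).mp hM)]

lemma conjTranspose_smul_sub_mulVec_of_eq_smul [Fintype κ] [Fintype ν] [CommRing α] [StarRing α]
    {z : α} (hz : star z * z = 1) {E A : Matrix κ ι α} {C : Matrix ν ι α} {s : κ → α} {u : ν → α}
    (h : Eᴴ *ᵥ s = z • (Aᴴ *ᵥ s + Cᴴ *ᵥ u)) :
    (z • E - A)ᴴ *ᵥ s = Cᴴ *ᵥ u := by
  rw [conjTranspose_sub, conjTranspose_smul, sub_mulVec, smul_mulVec, h, smul_smul, hz,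
    one_smul, add_sub_cancel_left]

lemma eq_zero_of_mulVec_eq_zero [Fintype ι] [DecidableEq ι] [Field α] {M : Matrix ι ι α}
    (hM : IsUnit M) {x : ι → α} (h : M *ᵥ x = 0) : x = 0 :=
  ((mulVec_injective_iff_isUnit.mpr hM).eq_iff' (mulVec_zero M)).mp h

lemma eq_zero_iff_eq_zero_of_mulVec_eq_smul [Fintype ι] [Fintype κ] [Field α] {c : α}
    (hc : c ≠ 0) {G : Matrix κ ι α} {H : Matrix ι κ α} {v : ι → α} {u : κ → α}
    (hG : G *ᵥ v = c • u) (hH : H *ᵥ u = c • v) :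
    u = 0 ↔ v = 0 := by
  constructor <;> rintro rfl
  · simpa [hc] using hH.symm
  · simpa [hc] using hG.symm

end General

section

variable {m p : ℕ} (D : Matrix (Fin p) (Fin m) ℂ) (γ : ℝ)

lemma isHermitian_Rmat : (Rmat D γ).IsHermitian := by
  simp [IsHermitian, Rmat, conjTranspose_sub, conjTranspose_smul, conjTranspose_mul]

lemma isHermitian_Smat : (Smat D γ).IsHermitian := by
  simp [IsHermitian, Smat, conjTranspose_sub, conjTranspose_smul, conjTranspose_mul]

lemma Smat_mul_eq_mul_Rmat : Smat D γ * D = D * Rmat D γ := by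
  simp [Smat, Rmat, Matrix.sub_mul, Matrix.mul_sub, Matrix.mul_assoc]

lemma conjTranspose_mul_self_eq_Rmat_add : Dᴴ * D = Rmat D γ + (γ : ℂ) ^ 2 • 1 := by
  simp [Rmat]

lemma mul_conjTranspose_self_eq_Smat_add : D * Dᴴ = Smat D γ + (γ : ℂ) ^ 2 • 1 := by
  simp [Smat]

variable {D γ}

lemma mul_inv_Rmat_eq_inv_Smat_mul (hR : IsUnit (Rmat D γ)) (hS : IsUnit (Smat D γ)) :
    D * (Rmat D γ)⁻¹ = (Smat D γ)⁻¹ * D :=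
  calc D * (Rmat D γ)⁻¹ = (Smat D γ)⁻¹ * (Smat D γ * D) * (Rmat D γ)⁻¹ := by
        rw [nonsing_inv_mul_cancel_left _ _ ((isUnit_iff_isUnit_det _).mp hS)]
    _ = (Smat D γ)⁻¹ * D := by
        rw [Smat_mul_eq_mul_Rmat, ← Matrix.mul_assoc,
          mul_nonsing_inv_cancel_right _ _ ((isUnit_iff_isUnit_det _).mp hR)]

lemma conjTranspose_mul_inv_Smat_eq_inv_Rmat_mul (hR : IsUnit (Rmat D γ))
    (hS : IsUnit (Smat D γ)) : Dᴴ * (Smat D γ)⁻¹ = (Rmat D γ)⁻¹ * Dᴴ := by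
  simpa [conjTranspose_nonsing_inv, (isHermitian_Rmat D γ).eq, (isHermitian_Smat D γ).eq]
    using congrArg conjTranspose (mul_inv_Rmat_eq_inv_Smat_mul hR hS).symm

end

noncomputable def couplingMatrix {m p : ℕ} (D : Matrix (Fin p) (Fin m) ℂ) (γ : ℝ) :
    Matrix (Fin p ⊕ Fin m) (Fin m ⊕ Fin p) ℂ :=
  fromBlocks (-D) ((γ : ℂ) • 1) ((γ : ℂ) • 1) (-Dᴴ)

noncomputable def couplingMatrixInv {m p : ℕ} (D : Matrix (Fin p) (Fin m) ℂ) (γ : ℝ) :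
    Matrix (Fin m ⊕ Fin p) (Fin p ⊕ Fin m) ℂ :=
  fromBlocks (-((Rmat D γ)⁻¹ * Dᴴ)) (-((γ : ℂ) • (Rmat D γ)⁻¹))
    (-((γ : ℂ) • (Smat D γ)⁻¹)) (-(D * (Rmat D γ)⁻¹))

lemma couplingMatrix_mul_couplingMatrixInv {m p : ℕ} {D : Matrix (Fin p) (Fin m) ℂ} {γ : ℝ}
    (hR : IsUnit (Rmat D γ)) (hS : IsUnit (Smat D γ)) :
    couplingMatrix D γ * couplingMatrixInv D γ = 1 := by
  rw [couplingMatrix, couplingMatrixInv, fromBlocks_multiply, ← fromBlocks_one]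
  congr 1 <;> simp only [Matrix.neg_mul, Matrix.mul_neg, neg_neg, Matrix.smul_mul,
    Matrix.mul_smul, Matrix.one_mul]
  · rw [← Matrix.mul_assoc, mul_inv_Rmat_eq_inv_Smat_mul hR hS, Matrix.mul_assoc,
      mul_conjTranspose_self_eq_Smat_add, Matrix.mul_add,
      nonsing_inv_mul _ ((isUnit_iff_isUnit_det _).mp hS), Matrix.mul_smul, Matrix.mul_one]
    module
  · module
  · rw [conjTranspose_mul_inv_Smat_eq_inv_Rmat_mul hR hS]
    module
  · rw [← Matrix.mul_assoc, conjTranspose_mul_self_eq_Rmat_add, Matrix.add_mul,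
      mul_nonsing_inv _ ((isUnit_iff_isUnit_det _).mp hR), Matrix.smul_mul, Matrix.one_mul]
    module

lemma couplingMatrix_mulVec_eq_of_eq_couplingMatrixInv_mulVec {m p : ℕ}
    {D : Matrix (Fin p) (Fin m) ℂ} {γ : ℝ} (hR : IsUnit (Rmat D γ)) (hS : IsUnit (Smat D γ))
    {x : Fin m ⊕ Fin p → ℂ} {y : Fin p ⊕ Fin m → ℂ} (h : x = couplingMatrixInv D γ *ᵥ y) :
    couplingMatrix D γ *ᵥ x = y := by
  rw [h, mulVec_mulVec, couplingMatrix_mul_couplingMatrixInv hR hS, one_mulVec]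

lemma couplingMatrix_mulVec_sumElim {m p : ℕ} (D : Matrix (Fin p) (Fin m) ℂ) (γ : ℝ)
    (v : Fin m → ℂ) (u : Fin p → ℂ) :
    couplingMatrix D γ *ᵥ Sum.elim v u =
      Sum.elim ((γ : ℂ) • u - D *ᵥ v) ((γ : ℂ) • v - Dᴴ *ᵥ u) := by
  simp [couplingMatrix, fromBlocks_mulVec, Matrix.neg_mulVec, Matrix.smul_mulVec,
    sub_eq_add_neg, add_comm]

section Pencil

variable {n m p : ℕ} (A E : Matrix (Fin n) (Fin n) ℂ) (B : Matrix (Fin n) (Fin m) ℂ)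
  (C : Matrix (Fin p) (Fin n) ℂ) (D : Matrix (Fin p) (Fin m) ℂ) (γ : ℝ)

lemma Spencil_eq_add_mul_couplingMatrixInv :
    Spencil A E B C D γ = fromBlocks A 0 0 Eᴴ +
      (fromBlocks B 0 0 0 : Matrix _ (Fin m ⊕ Fin p) ℂ) * couplingMatrixInv D γ *
        fromBlocks C 0 0 Bᴴ := by
  simp [Spencil, couplingMatrixInv, fromBlocks_multiply, fromBlocks_add, Matrix.mul_assoc,
    sub_eq_add_neg]

lemma Tpencil_eq_add_mul_couplingMatrixInv :
    Tpencil A E B C D γ = fromBlocks E 0 0 Aᴴ +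
      (fromBlocks 0 0 0 Cᴴ : Matrix _ (Fin m ⊕ Fin p) ℂ) * couplingMatrixInv D γ *
        fromBlocks C 0 0 Bᴴ := by
  simp [Tpencil, couplingMatrixInv, fromBlocks_multiply, fromBlocks_add, Matrix.mul_assoc,
    sub_eq_add_neg, conjTranspose_nonsing_inv, (isHermitian_Rmat D γ).eq]

lemma Spencil_mulVec_eq_smul_Tpencil_mulVec_iff {q s : Fin n → ℂ} {v : Fin m → ℂ}
    {u : Fin p → ℂ} (z : ℂ)
    (hvu : Sum.elim v u = couplingMatrixInv D γ *ᵥ Sum.elim (C *ᵥ q) (Bᴴ *ᵥ s)) :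
    Spencil A E B C D γ *ᵥ Sum.elim q s = z • (Tpencil A E B C D γ *ᵥ Sum.elim q s) ↔
      A *ᵥ q + B *ᵥ v = z • (E *ᵥ q) ∧ Eᴴ *ᵥ s = z • (Aᴴ *ᵥ s + Cᴴ *ᵥ u) := by
  have hY : fromBlocks C 0 0 Bᴴ *ᵥ Sum.elim q s = Sum.elim (C *ᵥ q) (Bᴴ *ᵥ s) := by
    simp [fromBlocks_mulVec]
  rw [Spencil_eq_add_mul_couplingMatrixInv, Tpencil_eq_add_mul_couplingMatrixInv, add_mulVec,
    add_mulVec, ← mulVec_mulVec, ← mulVec_mulVec, ← mulVec_mulVec, ← mulVec_mulVec, hY, ← hvu]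
  simp [fromBlocks_mulVec, funext_iff]

end Pencil

/-- If `e^{iθ}` is an eigenvalue of the pencil `(S_γ, T_γ)` with eigenvector `(q,s)`,
then the vectors `u, v` obtained via the inverse block matrix are nonzero singular
vectors of `G(e^{iθ})` for the singular value `γ`. -/
theorem pencil_eigenvector_gives_singular_vectors {n m p : ℕ}
    (A E : Matrix (Fin n) (Fin n) ℂ) (B : Matrix (Fin n) (Fin m) ℂ)
    (C : Matrix (Fin p) (Fin n) ℂ) (D : Matrix (Fin p) (Fin m) ℂ)
    (θ γ : ℝ) (hγ : 0 < γ)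
    (hR : IsUnit (Rmat D γ)) (hS : IsUnit (Smat D γ))
    (hZ : IsUnit (Complex.exp (Complex.I * (θ : ℂ)) • E - A))
    (q s : Fin n → ℂ) (hqs : Sum.elim q s ≠ 0)
    (heig : Spencil A E B C D γ *ᵥ Sum.elim q s =
      Complex.exp (Complex.I * (θ : ℂ)) • (Tpencil A E B C D γ *ᵥ Sum.elim q s))
    (v : Fin m → ℂ) (u : Fin p → ℂ)
    (hvu : Sum.elim v u =
      fromBlocks (-((Rmat D γ)⁻¹ * Dᴴ)) (-((γ : ℂ) • (Rmat D γ)⁻¹))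
          (-((γ : ℂ) • (Smat D γ)⁻¹)) (-(D * (Rmat D γ)⁻¹)) *ᵥ
        Sum.elim (C *ᵥ q) (Bᴴ *ᵥ s)) :
    u ≠ 0 ∧ v ≠ 0 ∧
    (C * (Complex.exp (Complex.I * (θ : ℂ)) • E - A)⁻¹ * B + D) *ᵥ v = (γ : ℂ) • u ∧
    (C * (Complex.exp (Complex.I * (θ : ℂ)) • E - A)⁻¹ * B + D)ᴴ *ᵥ u = (γ : ℂ) • v := by
  set z := Complex.exp (Complex.I * (θ : ℂ))
  have hz : star z * z = 1 := by
    rw [Complex.star_def, Complex.conj_mul', Complex.norm_exp_I_mul_ofReal]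
    norm_num
  obtain ⟨hCq, hBs⟩ : (γ : ℂ) • u - D *ᵥ v = C *ᵥ q ∧ (γ : ℂ) • v - Dᴴ *ᵥ u = Bᴴ *ᵥ s := by
    simpa [couplingMatrix_mulVec_sumElim, funext_iff] using
      couplingMatrix_mulVec_eq_of_eq_couplingMatrixInv_mulVec hR hS hvu
  obtain ⟨hAq, hEs⟩ := (Spencil_mulVec_eq_smul_Tpencil_mulVec_iff A E B C D γ z hvu).mp heig
  have hq : (z • E - A) *ᵥ q = B *ᵥ v := by
    rw [sub_mulVec, smul_mulVec, ← hAq, add_sub_cancel_left]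
  have hs := conjTranspose_smul_sub_mulVec_of_eq_smul hz hEs
  have hG : (C * (z • E - A)⁻¹ * B + D) *ᵥ v = (γ : ℂ) • u := by
    rw [mul_inv_mul_add_mulVec_of_mulVec_eq hZ B C D hq, ← hCq, sub_add_cancel]
  have hGH : (C * (z • E - A)⁻¹ * B + D)ᴴ *ᵥ u = (γ : ℂ) • v := by
    rw [conjTranspose_add, conjTranspose_mul, conjTranspose_mul, conjTranspose_nonsing_inv,
      ← Matrix.mul_assoc, mul_inv_mul_add_mulVec_of_mulVec_eq ((isUnit_conjTranspose _).mpr hZ)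
        Cᴴ Bᴴ Dᴴ hs, ← hBs, sub_add_cancel]
  have huv := eq_zero_iff_eq_zero_of_mulVec_eq_smul (by exact_mod_cast hγ.ne') hG hGH
  have hboth : ¬(u = 0 ∧ v = 0) := by
    rintro ⟨rfl, rfl⟩
    apply hqs
    rw [eq_zero_of_mulVec_eq_zero hZ (hq.trans (mulVec_zero B)),
      eq_zero_of_mulVec_eq_zero ((isUnit_conjTranspose _).mpr hZ) (hs.trans (mulVec_zero _)),
      Sum.elim_zero_zero]
  exact ⟨fun hu => hboth ⟨hu, huv.mp hu⟩, fun hv => hboth ⟨huv.mpr hv, hv⟩, hG, hGH⟩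
end
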